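/- Let σ := μ ∘ ν ∘ μ on {z ∈ ℂ : |z| > 1}, where μ(z) = (z+1)/(z−1) and ν is as defined on the right half-plane. Then for every θ ∈ (0, π), the radial limits lim_{r→1⁺} σ(r·e^{iθ}) and lim_{r→1⁺} σ(r·e^{−iθ}) both exist, are equal to each other, equal the real number (cot(θ/2) − 1)/(cot(θ/2) + 1), and in particular lie in the closed real interval [−1, 1]. That is, σ maps conjugate points of the unit circle onto the same point of [−1,1]. -/

import Mathlib

/-- The Möbius transformation `μ(z) := (z+1)/(z−1)`. -/
noncomputable def mu (z : ℂ) : ℂ := (z + 1) / (z - 1)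

/-- The angle-tripling map `ν` on the right half-plane: `ν(z) = z` if `|arg z| ≤ π/4`,
`ν(z) = |z|·e^{i(3·arg z − π/2)}` if `arg z > π/4`, and
`ν(z) = |z|·e^{i(3·arg z + π/2)}` if `arg z < −π/4`. -/
noncomputable def nuMap (z : ℂ) : ℂ :=
  if |Complex.arg z| ≤ Real.pi / 4 then z
  else if 0 < Complex.arg z then
    ((‖z‖ : ℝ) : ℂ) * Complex.exp (Complex.I * ((3 * Complex.arg z - Real.pi / 2 : ℝ) : ℂ))
  else
    ((‖z‖ : ℝ) : ℂ) * Complex.exp (Complex.I * ((3 * Complex.arg z + Real.pi / 2 : ℝ) : ℂ))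

/-- `σ := μ ∘ ν ∘ μ`. -/
noncomputable def sigmaMap (z : ℂ) : ℂ := mu (nuMap (mu z))

open Complex Filter

/-- `μ` is continuous away from `1`. -/
lemma mu_contAt {z : ℂ} (h : z ≠ 1) : ContinuousAt mu z := by
  apply ContinuousAt.div (by fun_prop) (by fun_prop)
  exact sub_ne_zero.mpr h

/-- Value of `μ` at `e^{iθ}` for `θ ∈ (0, π)`. -/
lemma mu_exp (θ : ℝ) (h0 : 0 < θ) (h1 : θ < Real.pi) :
    mu (Complex.exp (Complex.I * θ)) = -(Complex.I * (Real.cot (θ/2) : ℂ)) := by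
  have hs : Real.sin (θ/2) ≠ 0 := by
    have := Real.sin_pos_of_pos_of_lt_pi (by linarith : 0 < θ/2) (by linarith : θ/2 < Real.pi)
    linarith
  have hd : Complex.exp (Complex.I * θ) - 1 ≠ 0 := by
    intro h
    have h2 : Complex.exp (Complex.I * θ) = 1 := by linear_combination h
    rw [mul_comm, Complex.exp_mul_I] at h2
    have him : Real.sin θ = 0 := by simpa [Complex.sin_ofReal_re] using congrArg Complex.im h2
    have := Real.sin_pos_of_pos_of_lt_pi h0 h1
    linarith
  rw [mu, div_eq_iff hd, Real.cot_eq_cos_div_sin,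
    mul_comm Complex.I (θ:ℂ), Complex.exp_mul_I]
  have hθ : (θ:ℂ) = 2 * ((θ:ℂ)/2) := by ring
  rw [hθ, Complex.cos_two_mul, Complex.sin_two_mul]
  have hsC : Complex.sin ((θ:ℂ)/2) ≠ 0 := by
    have : ((Real.sin (θ/2) : ℝ) : ℂ) ≠ 0 := by exact_mod_cast hs
    simpa [Complex.ofReal_sin] using this
  push_cast
  field_simp
  linear_combination (2 * Complex.cos ((θ:ℂ)/2) * Complex.I) * Complex.sin_sq_add_cos_sq ((θ:ℂ)/2) +
    2 * Complex.cos ((θ:ℂ)/2)^2 * Complex.sin ((θ:ℂ)/2) * Complex.I_sq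

/-- If `g → −i·c` with `c > 0`, then `ν ∘ g → −c`. -/
lemma nu_tendsto_neg {α : Type*} {l : Filter α} {g : α → ℂ} {c : ℝ} (hc : 0 < c)
    (hg : Tendsto g l (nhds (-(Complex.I * c)))) :
    Tendsto (fun x => nuMap (g x)) l (nhds (-(c:ℂ))) := by
  have harg0 : Complex.arg (-(Complex.I * c)) = -(Real.pi/2) := by
    have h : -(Complex.I * (c:ℂ)) = (c:ℂ) * (-Complex.I) := by ring
    rw [h, Complex.arg_real_mul _ hc, Complex.arg_neg_I]
  have hmem : -(Complex.I * (c:ℂ)) ∈ Complex.slitPlane := by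
    right; simp [hc.ne']
  have targ : Tendsto (fun x => Complex.arg (g x)) l (nhds (-(Real.pi/2))) := by
    have := (Complex.continuousAt_arg hmem).tendsto.comp hg
    rwa [harg0] at this
  have hev : ∀ᶠ x in l, Complex.arg (g x) < -(Real.pi/4) :=
    targ.eventually_lt_const (by linarith [Real.pi_pos])
  have heq : ∀ᶠ x in l,
      ((‖g x‖ : ℝ) : ℂ) *
        Complex.exp (Complex.I * ((3 * Complex.arg (g x) + Real.pi / 2 : ℝ) : ℂ)) = nuMap (g x) := by
    filter_upwards [hev] with x hx
    have h1 : ¬ |Complex.arg (g x)| ≤ Real.pi/4 := by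
      rw [abs_le]; push_neg; intro h; linarith [Real.pi_pos]
    have h2 : ¬ 0 < Complex.arg (g x) := by push_neg; linarith [Real.pi_pos]
    simp [nuMap, h1, h2]
  have habs : Tendsto (fun x => ((‖g x‖ : ℝ) : ℂ)) l (nhds (c:ℂ)) := by
    have h1 : Tendsto (fun x => ‖g x‖) l (nhds ‖-(Complex.I * c)‖) :=
      (continuous_norm.tendsto _).comp hg
    have h2 : ‖-(Complex.I * (c:ℂ))‖ = c := by simp [abs_of_pos hc]
    rw [h2] at h1
    exact (Complex.continuous_ofReal.tendsto _).comp h1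
  have ht : Tendsto (fun x => (3 * Complex.arg (g x) + Real.pi/2 : ℝ)) l
      (nhds (3 * (-(Real.pi/2)) + Real.pi/2)) :=
    (targ.const_mul 3).add_const _
  have hexp : Tendsto
      (fun x => Complex.exp (Complex.I * ((3 * Complex.arg (g x) + Real.pi / 2 : ℝ) : ℂ))) l
      (nhds (Complex.exp (Complex.I * ((3 * (-(Real.pi/2)) + Real.pi/2 : ℝ) : ℂ)))) :=
    (Complex.continuous_exp.tendsto _).comp
      (((Complex.continuous_ofReal.tendsto _).comp ht).const_mul Complex.I)
  have hval : ((c:ℂ)) * Complex.exp (Complex.I * ((3 * (-(Real.pi/2)) + Real.pi/2 : ℝ) : ℂ))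
      = -(c:ℂ) := by
    have h : (3 * (-(Real.pi/2)) + Real.pi/2 : ℝ) = -Real.pi := by ring
    rw [h, mul_comm Complex.I, Complex.exp_mul_I]
    push_cast
    simp
  have := (habs.mul hexp).congr' heq
  rwa [hval] at this

/-- If `g → i·c` with `c > 0`, then `ν ∘ g → −c`. -/
lemma nu_tendsto_pos {α : Type*} {l : Filter α} {g : α → ℂ} {c : ℝ} (hc : 0 < c)
    (hg : Tendsto g l (nhds (Complex.I * c))) :
    Tendsto (fun x => nuMap (g x)) l (nhds (-(c:ℂ))) := by
  have harg0 : Complex.arg (Complex.I * c) = Real.pi/2 := by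
    have h : (Complex.I * (c:ℂ)) = (c:ℂ) * Complex.I := by ring
    rw [h, Complex.arg_real_mul _ hc, Complex.arg_I]
  have hmem : Complex.I * (c:ℂ) ∈ Complex.slitPlane := by
    right; simp [hc.ne']
  have targ : Tendsto (fun x => Complex.arg (g x)) l (nhds (Real.pi/2)) := by
    have := (Complex.continuousAt_arg hmem).tendsto.comp hg
    rwa [harg0] at this
  have hev : ∀ᶠ x in l, Real.pi/4 < Complex.arg (g x) :=
    targ.eventually_const_lt (by linarith [Real.pi_pos])
  have heq : ∀ᶠ x in l,
      ((‖g x‖ : ℝ) : ℂ) *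
        Complex.exp (Complex.I * ((3 * Complex.arg (g x) - Real.pi / 2 : ℝ) : ℂ)) = nuMap (g x) := by
    filter_upwards [hev] with x hx
    have h1 : ¬ |Complex.arg (g x)| ≤ Real.pi/4 := by
      rw [abs_le]; push_neg; intro h; linarith [Real.pi_pos]
    have h2 : 0 < Complex.arg (g x) := by linarith [Real.pi_pos]
    simp [nuMap, h1, h2]
  have habs : Tendsto (fun x => ((‖g x‖ : ℝ) : ℂ)) l (nhds (c:ℂ)) := by
    have h1 : Tendsto (fun x => ‖g x‖) l (nhds ‖Complex.I * c‖) :=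
      (continuous_norm.tendsto _).comp hg
    have h2 : ‖Complex.I * (c:ℂ)‖ = c := by simp [abs_of_pos hc]
    rw [h2] at h1
    exact (Complex.continuous_ofReal.tendsto _).comp h1
  have ht : Tendsto (fun x => (3 * Complex.arg (g x) - Real.pi/2 : ℝ)) l
      (nhds (3 * (Real.pi/2) - Real.pi/2)) :=
    (targ.const_mul 3).sub_const _
  have hexp : Tendsto
      (fun x => Complex.exp (Complex.I * ((3 * Complex.arg (g x) - Real.pi / 2 : ℝ) : ℂ))) l
      (nhds (Complex.exp (Complex.I * ((3 * (Real.pi/2) - Real.pi/2 : ℝ) : ℂ)))) :=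
    (Complex.continuous_exp.tendsto _).comp
      (((Complex.continuous_ofReal.tendsto _).comp ht).const_mul Complex.I)
  have hval : ((c:ℂ)) * Complex.exp (Complex.I * ((3 * (Real.pi/2) - Real.pi/2 : ℝ) : ℂ))
      = -(c:ℂ) := by
    have h : (3 * (Real.pi/2) - Real.pi/2 : ℝ) = Real.pi := by ring
    rw [h, mul_comm Complex.I, Complex.exp_mul_I]
    push_cast
    simp
  have := (habs.mul hexp).congr' heq
  rwa [hval] at this

/-- For every `θ ∈ (0, π)`, the two radial limits
`lim_{r→1⁺} σ(r·e^{iθ})` and `lim_{r→1⁺} σ(r·e^{−iθ})` both exist, coincide, and equal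
the real number `(cot(θ/2) − 1)/(cot(θ/2) + 1)`, which lies in `[−1, 1]`: `σ` maps
conjugate points of the unit circle onto the same point of `[−1,1]`. -/
theorem sigma_identifies_conjugate_boundary_points (θ : ℝ) (h0 : 0 < θ) (h1 : θ < Real.pi) :
    Filter.Tendsto (fun r : ℝ => sigmaMap ((r : ℂ) * Complex.exp (Complex.I * (θ : ℂ))))
      (nhdsWithin 1 (Set.Ioi 1))
      (nhds (((Real.cot (θ / 2) - 1) / (Real.cot (θ / 2) + 1) : ℝ) : ℂ)) ∧
    Filter.Tendsto (fun r : ℝ => sigmaMap ((r : ℂ) * Complex.exp (-(Complex.I * (θ : ℂ)))))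
      (nhdsWithin 1 (Set.Ioi 1))
      (nhds (((Real.cot (θ / 2) - 1) / (Real.cot (θ / 2) + 1) : ℝ) : ℂ)) ∧
    (-1 ≤ (Real.cot (θ / 2) - 1) / (Real.cot (θ / 2) + 1) ∧
      (Real.cot (θ / 2) - 1) / (Real.cot (θ / 2) + 1) ≤ 1) := by
  set c : ℝ := Real.cot (θ/2) with hc_def
  have hsin : 0 < Real.sin (θ/2) :=
    Real.sin_pos_of_pos_of_lt_pi (by linarith) (by linarith [Real.pi_pos])
  have hcos : 0 < Real.cos (θ/2) :=
    Real.cos_pos_of_mem_Ioo ⟨by linarith [Real.pi_pos], by linarith⟩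
  have hc : 0 < c := by
    rw [hc_def, Real.cot_eq_cos_div_sin]
    exact div_pos hcos hsin
  -- `e^{iθ} ≠ 1` and `e^{-iθ} ≠ 1`
  have hexp_ne : Complex.exp (Complex.I * θ) ≠ 1 := by
    intro h
    rw [mul_comm, Complex.exp_mul_I] at h
    have him : Real.sin θ = 0 := by simpa [Complex.sin_ofReal_re] using congrArg Complex.im h
    have := Real.sin_pos_of_pos_of_lt_pi h0 h1
    linarith
  have hexp_ne' : Complex.exp (-(Complex.I * θ)) ≠ 1 := by
    intro h
    have : Complex.exp (Complex.I * θ) = 1 := by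
      have := congrArg (· * Complex.exp (Complex.I * θ)) h
      simpa [← Complex.exp_add] using this.symm
    exact hexp_ne this
  -- value of mu at the conjugate point
  have hmu_exp' : mu (Complex.exp (-(Complex.I * θ))) = Complex.I * (c : ℂ) := by
    have hconj : Complex.exp (-(Complex.I * θ)) = (starRingEnd ℂ) (Complex.exp (Complex.I * θ)) := by
      rw [← Complex.exp_conj]
      simp
    have hmuconj : mu ((starRingEnd ℂ) (Complex.exp (Complex.I * θ)))
        = (starRingEnd ℂ) (mu (Complex.exp (Complex.I * θ))) := by
      simp [mu, map_div₀]
    rw [hconj, hmuconj, mu_exp θ h0 h1, map_neg, map_mul, Complex.conj_I, Complex.conj_ofReal]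
    ring
  -- mu of the negative real limit point
  have hcR : c + 1 ≠ 0 := by positivity
  have hcC : (c:ℂ) + 1 ≠ 0 := by
    have : ((c+1:ℝ):ℂ) ≠ 0 := Complex.ofReal_ne_zero.mpr hcR
    push_cast at this; exact this
  have hd : (-(c:ℂ)) - 1 ≠ 0 := by
    have h' : ((-c-1:ℝ):ℂ) ≠ 0 := Complex.ofReal_ne_zero.mpr (by linarith)
    intro h
    apply h'
    push_cast
    linear_combination h
  have hnc_ne : -(c:ℂ) ≠ 1 := by
    intro h
    have h' : ((-c:ℝ):ℂ) = ((1:ℝ):ℂ) := by push_cast; exact h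
    have : (-c:ℝ) = 1 := Complex.ofReal_injective h'
    linarith
  have hmu_neg : mu (-(c:ℂ)) = (((c - 1) / (c + 1) : ℝ) : ℂ) := by
    rw [mu]
    push_cast
    rw [div_eq_div_iff hd hcC]
    ring
  -- the paths converge to e^{±iθ}
  have hone : Tendsto (fun r:ℝ => (r:ℂ)) (nhdsWithin 1 (Set.Ioi 1)) (nhds (1:ℂ)) :=
    (Complex.continuous_ofReal.tendsto 1).mono_left nhdsWithin_le_nhds
  have hpath1 : Tendsto (fun r:ℝ => (r:ℂ) * Complex.exp (Complex.I * θ))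
      (nhdsWithin 1 (Set.Ioi 1)) (nhds (Complex.exp (Complex.I * θ))) := by
    simpa using hone.mul_const (Complex.exp (Complex.I * θ))
  have hpath2 : Tendsto (fun r:ℝ => (r:ℂ) * Complex.exp (-(Complex.I * θ)))
      (nhdsWithin 1 (Set.Ioi 1)) (nhds (Complex.exp (-(Complex.I * θ)))) := by
    simpa using hone.mul_const (Complex.exp (-(Complex.I * θ)))
  -- compose with mu
  have hmu1 : Tendsto (fun r:ℝ => mu ((r:ℂ) * Complex.exp (Complex.I * θ)))
      (nhdsWithin 1 (Set.Ioi 1)) (nhds (-(Complex.I * (c:ℂ)))) := by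
    have := (mu_contAt hexp_ne).tendsto.comp hpath1
    rw [mu_exp θ h0 h1] at this
    exact this
  have hmu2 : Tendsto (fun r:ℝ => mu ((r:ℂ) * Complex.exp (-(Complex.I * θ))))
      (nhdsWithin 1 (Set.Ioi 1)) (nhds (Complex.I * (c:ℂ))) := by
    have := (mu_contAt hexp_ne').tendsto.comp hpath2
    rw [hmu_exp'] at this
    exact this
  -- compose with nu
  have hnu1 := nu_tendsto_neg hc hmu1
  have hnu2 := nu_tendsto_pos hc hmu2
  -- compose with mu again
  have hfin1 := (mu_contAt hnc_ne).tendsto.comp hnu1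
  have hfin2 := (mu_contAt hnc_ne).tendsto.comp hnu2
  rw [hmu_neg] at hfin1 hfin2
  refine ⟨hfin1, hfin2, ?_, ?_⟩
  · rw [le_div_iff₀ (by linarith : (0:ℝ) < c + 1)]
    linarith
  · rw [div_le_one (by linarith : (0:ℝ) < c + 1)]
    linarith
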